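/- arXiv:1202.5432 — 2 statements merged into one kernel-verified Lean document; each statement's English description precedes it below -/
import Mathlib

section
/- Let Σ be a positive definite p×p real matrix, let p_1, p_2 > 0 with p_1 + p_2 = 1, and let z_1, z_2 ∈ ℝ^p with p_1 z_1 + p_2 z_2 = 0 and z_1 ≠ 0. Set Γ = p_1 z_1 z_1′ + p_2 z_2 z_2′. Then the vector θ̃ = Σ^{−1}(z_1 − z_2) is an eigenvector of Σ^{−1}Γ associated with the eigenvalue (p_1/p_2) z_1′ Σ^{−1} z_1, and this eigenvalue is the unique nonzero (hence maximal) eigenvalue of Σ^{−1}Γ. -/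
/-!
Centring forces `z₁ = p₂ d` and `z₂ = -p₁ d` with `d = z₁ - z₂`, so `Γ = p₁ p₂ d dᵀ` has rank one
and `Σ⁻¹ Γ = (Σ⁻¹ d) (p₁ p₂ d)ᵀ`. A rank-one matrix `u vᵀ` sends every vector onto the line of `u`,
so its only nonzero eigenvalue is `v ⬝ᵥ u`, with eigenvector `u`; here that eigenvalue is
`p₁ p₂ dᵀ Σ⁻¹ d = (p₁ / p₂) z₁ᵀ Σ⁻¹ z₁`, which is positive because `Σ⁻¹` is positive definite.
-/

open Matrix

namespace Matrix

variable {n R : Type*} [Fintype n]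

theorem vecMulVec_mulVec_eq_smul [CommSemiring R] (u v w : n → R) :
    vecMulVec u v *ᵥ w = (v ⬝ᵥ w) • u := by
  rw [vecMulVec_mulVec, op_smul_eq_smul]

theorem eq_dotProduct_of_vecMulVec_mulVec_eq_smul [Field R] {u v w : n → R} {c : R}
    (hc : c ≠ 0) (hw : w ≠ 0) (h : vecMulVec u v *ᵥ w = c • w) : c = v ⬝ᵥ u := by
  rw [vecMulVec_mulVec_eq_smul] at h
  have hvw : v ⬝ᵥ w ≠ 0 := fun h0 ↦ by
    rw [h0, zero_smul, eq_comm, smul_eq_zero] at h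
    exact h.elim hc hw
  have hdot : (v ⬝ᵥ w) * (v ⬝ᵥ u) = c * (v ⬝ᵥ w) := by
    simpa only [dotProduct_smul, smul_eq_mul] using congrArg (v ⬝ᵥ ·) h
  exact mul_right_cancel₀ hvw (by rw [← hdot, mul_comm])

end Matrix

section TwoSlices

variable {n R : Type*} [CommRing R] {p₁ p₂ : R} {z₁ z₂ : n → R}

theorem eq_smul_sub_of_smul_add_smul_eq_zero (hbar : p₁ • z₁ + p₂ • z₂ = 0)
    (hsum : p₁ + p₂ = 1) : z₁ = p₂ • (z₁ - z₂) := by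
  calc z₁ = (p₁ + p₂) • z₁ := by rw [hsum, one_smul]
    _ = p₂ • (z₁ - z₂) + (p₁ • z₁ + p₂ • z₂) := by module
    _ = p₂ • (z₁ - z₂) := by rw [hbar, add_zero]

theorem smul_vecMulVec_add_smul_vecMulVec_eq_mul_smul_vecMulVec_sub
    (hbar : p₁ • z₁ + p₂ • z₂ = 0) (hsum : p₁ + p₂ = 1) :
    p₁ • vecMulVec z₁ z₁ + p₂ • vecMulVec z₂ z₂ =
      (p₁ * p₂) • vecMulVec (z₁ - z₂) (z₁ - z₂) := by
  have h₁ := eq_smul_sub_of_smul_add_smul_eq_zero hbar hsum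
  have h₂ := eq_smul_sub_of_smul_add_smul_eq_zero (z₁ := z₂) (z₂ := z₁)
    (by rwa [add_comm]) (by rwa [add_comm])
  rw [← neg_sub] at h₂
  set d := z₁ - z₂
  rw [h₁, h₂]
  simp only [smul_vecMulVec, vecMulVec_smul, neg_vecMulVec, vecMulVec_neg]
  linear_combination (norm := module) (p₁ * p₂ * hsum) • vecMulVec d d

end TwoSlices

/-- SIR identification with two slices: `θ̃ = Σ⁻¹(z₁ - z₂)` is an eigenvector of `Σ⁻¹Γ`
for the eigenvalue `(p₁/p₂) z₁'Σ⁻¹z₁`, which is the unique nonzero (hence maximal)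
eigenvalue of `Σ⁻¹Γ`. -/
theorem sir_two_slice_eigenvector
    {p : ℕ} (Sig : Matrix (Fin p) (Fin p) ℝ) (hSig : Sig.PosDef)
    (p₁ p₂ : ℝ) (hp₁ : 0 < p₁) (hp₂ : 0 < p₂) (hsum : p₁ + p₂ = 1)
    (z₁ z₂ : Fin p → ℝ) (hbar : p₁ • z₁ + p₂ • z₂ = 0) (hz₁ : z₁ ≠ 0)
    (Γ : Matrix (Fin p) (Fin p) ℝ)
    (hΓ : Γ = p₁ • Matrix.vecMulVec z₁ z₁ + p₂ • Matrix.vecMulVec z₂ z₂)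
    (lam : ℝ) (hlam : lam = p₁ / p₂ * dotProduct z₁ (Sig⁻¹.mulVec z₁)) :
    Sig⁻¹.mulVec (z₁ - z₂) ≠ 0 ∧
    (Sig⁻¹ * Γ).mulVec (Sig⁻¹.mulVec (z₁ - z₂)) = lam • Sig⁻¹.mulVec (z₁ - z₂) ∧
    lam ≠ 0 ∧
    (∀ c : ℝ, c ≠ 0 → (∃ v : Fin p → ℝ, v ≠ 0 ∧ (Sig⁻¹ * Γ).mulVec v = c • v) → c = lam) := by
  have hz₁d := eq_smul_sub_of_smul_add_smul_eq_zero hbar hsum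
  have hd : z₁ - z₂ ≠ 0 := fun h ↦ hz₁ (by rw [hz₁d, h, smul_zero])
  have hq : 0 < (z₁ - z₂) ⬝ᵥ Sig⁻¹ *ᵥ (z₁ - z₂) := by
    simpa using hSig.inv.dotProduct_mulVec_pos hd
  have hM : Sig⁻¹ * Γ = vecMulVec (Sig⁻¹ *ᵥ (z₁ - z₂)) ((p₁ * p₂) • (z₁ - z₂)) := by
    rw [hΓ, smul_vecMulVec_add_smul_vecMulVec_eq_mul_smul_vecMulVec_sub hbar hsum,
      Matrix.mul_smul, mul_vecMulVec, vecMulVec_smul]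
  have hlam' : lam = (p₁ * p₂) • (z₁ - z₂) ⬝ᵥ Sig⁻¹ *ᵥ (z₁ - z₂) := by
    rw [hlam]
    conv_lhs => rw [hz₁d]
    rw [mulVec_smul, smul_dotProduct, dotProduct_smul, smul_dotProduct]
    simp only [smul_eq_mul]
    field_simp
  refine ⟨fun h ↦ by simp [h] at hq, ?_, ?_, ?_⟩
  · rw [hM, vecMulVec_mulVec_eq_smul, hlam']
  · rw [hlam', smul_dotProduct, smul_eq_mul]
    positivity
  · rintro c hc ⟨v, hv, hcv⟩
    rw [hlam']
    exact eq_dotProduct_of_vecMulVec_mulVec_eq_smul hc hv (hM ▸ hcv)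
end

section
/- Let x_1, …, x_n ∈ ℝ^p with n ≥ 2. Define X̄_m = m^{−1} Σ_{k=1}^m x_k, Σ_m = m^{−1} Σ_{k=1}^m (x_k − X̄_m)(x_k − X̄_m)′, Φ_n = x_n − X̄_{n−1}, and ρ_n = Φ_n′ Σ_{n−1}^{−1} Φ_n. If Σ_{n−1} is invertible and n + ρ_n ≠ 0, then Σ_n is invertible and its inverse satisfies the Riccati equation Σ_n^{−1} = (n/(n−1)) Σ_{n−1}^{−1} − (n/((n−1)(n+ρ_n))) Σ_{n−1}^{−1} Φ_n Φ_n′ Σ_{n−1}^{−1}. -/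
/-!
Adding a point `a` to a sample `s` of size `m` changes the scatter matrix
`∑ (x k - μ)(x k - μ)'` by `(m / (m + 1)) Φ Φ'`, where `Φ = x a - μ` is the deviation of the new
point from the old mean: split each deviation from the new mean as a deviation from the old
mean plus the shift of the mean (parallel-axis decomposition), the cross terms cancel, and the
shift is `Φ / (m + 1)`. Hence `Σₙ = ((n - 1) / n) (Σₙ₋₁ + Φ (Φ / n)')` is a scaled rank-one
perturbation of `Σₙ₋₁`, and the Sherman–Morrison formula inverts it; its denominator
`1 + ρ / n` is nonzero exactly when `n + ρ ≠ 0`.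
-/

open Matrix Finset

namespace Matrix

variable {ι l m n o α : Type*}

theorem sum_vecMulVec [NonUnitalNonAssocSemiring α] (s : Finset ι) (w : ι → m → α) (v : n → α) :
    ∑ k ∈ s, vecMulVec (w k) v = vecMulVec (∑ k ∈ s, w k) v := by
  ext i j
  simp only [sum_apply, vecMulVec_apply, Finset.sum_apply, sum_mul]

theorem vecMulVec_sum [NonUnitalNonAssocSemiring α] (s : Finset ι) (w : m → α) (v : ι → n → α) :
    ∑ k ∈ s, vecMulVec w (v k) = vecMulVec w (∑ k ∈ s, v k) := by
  ext i j
  simp only [sum_apply, vecMulVec_apply, Finset.sum_apply, mul_sum]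

theorem vecMulVec_mul_mul_vecMulVec [CommSemiring α] [Fintype m] (u : l → α) (v w : m → α)
    (x : o → α) (M : Matrix m m α) :
    vecMulVec u v * M * vecMulVec w x = (v ⬝ᵥ M *ᵥ w) • vecMulVec u x := by
  rw [Matrix.mul_assoc, mul_vecMulVec, vecMulVec_mul_vecMulVec, vecMulVec_smul]

variable {K : Type*} [Field K] [Fintype n] [DecidableEq n]

theorem inv_smul₀ {k : K} (hk : k ≠ 0) (A : Matrix n n K) : (k • A)⁻¹ = k⁻¹ • A⁻¹ := by
  by_cases h : IsUnit A.det
  · exact inv_smul' A (Units.mk0 k hk) h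
  · have hkA : ¬IsUnit (k • A).det := by simpa [det_smul, isUnit_iff_ne_zero, hk] using h
    rw [nonsing_inv_apply_not_isUnit _ h, nonsing_inv_apply_not_isUnit _ hkA, smul_zero]

theorem add_vecMulVec_mul_eq_one {A : Matrix n n K} (hA : IsUnit A.det) {u v : n → K}
    (huv : 1 + v ⬝ᵥ A⁻¹ *ᵥ u ≠ 0) :
    (A + vecMulVec u v) *
      (A⁻¹ - (1 + v ⬝ᵥ A⁻¹ *ᵥ u)⁻¹ • (A⁻¹ * vecMulVec u v * A⁻¹)) = 1 := by
  have hAA : A * A⁻¹ = 1 := mul_nonsing_inv A hA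
  have hcancel : A * (A⁻¹ * vecMulVec u v * A⁻¹) = vecMulVec u v * A⁻¹ := by
    rw [← Matrix.mul_assoc, ← Matrix.mul_assoc, hAA, Matrix.one_mul]
  have hsquare : vecMulVec u v * (A⁻¹ * vecMulVec u v * A⁻¹) =
      (v ⬝ᵥ A⁻¹ *ᵥ u) • (vecMulVec u v * A⁻¹) := by
    rw [← Matrix.mul_assoc, ← Matrix.mul_assoc, vecMulVec_mul_mul_vecMulVec, Matrix.smul_mul]
  rw [Matrix.add_mul, Matrix.mul_sub, Matrix.mul_sub, Matrix.mul_smul, Matrix.mul_smul, hAA,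
    hcancel, hsquare, smul_smul]
  match_scalars <;> field_simp
  ring

/-- The **Sherman–Morrison formula**. -/
theorem inv_add_vecMulVec {A : Matrix n n K} (hA : IsUnit A.det) {u v : n → K}
    (huv : 1 + v ⬝ᵥ A⁻¹ *ᵥ u ≠ 0) :
    (A + vecMulVec u v)⁻¹ = A⁻¹ - (1 + v ⬝ᵥ A⁻¹ *ᵥ u)⁻¹ • (A⁻¹ * vecMulVec u v * A⁻¹) :=
  inv_eq_right_inv (add_vecMulVec_mul_eq_one hA huv)

theorem isUnit_det_add_vecMulVec {A : Matrix n n K} (hA : IsUnit A.det) {u v : n → K}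
    (huv : 1 + v ⬝ᵥ A⁻¹ *ᵥ u ≠ 0) : IsUnit (A + vecMulVec u v).det :=
  isUnit_det_of_right_inverse (add_vecMulVec_mul_eq_one hA huv)

end Matrix

section SampleCovariance

variable {ι n K : Type*}

/-- Parallel-axis (König–Huygens) decomposition of the scatter matrix about an arbitrary point. -/
theorem sum_vecMulVec_sub_sub [CommRing K] (s : Finset ι) (x : ι → n → K) {μ : n → K}
    (hμ : ∑ k ∈ s, x k = #s • μ) (c : n → K) :
    ∑ k ∈ s, vecMulVec (x k - c) (x k - c) =
      ∑ k ∈ s, vecMulVec (x k - μ) (x k - μ) + #s • vecMulVec (μ - c) (μ - c) := by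
  have hcentred : ∑ k ∈ s, (x k - μ) = 0 := by
    rw [sum_sub_distrib, hμ, sum_const, sub_self]
  have hsplit : ∀ k, x k - c = (x k - μ) + (μ - c) := fun k => by abel
  simp only [hsplit, add_vecMulVec, vecMulVec_add, sum_add_distrib, sum_vecMulVec, vecMulVec_sum,
    hcentred, zero_vecMulVec, vecMulVec_zero, sum_const]
  abel

theorem sum_insert_vecMulVec_sub_sub [CommRing K] [DecidableEq ι] {s : Finset ι} {a : ι}
    (ha : a ∉ s) (x : ι → n → K) {μ μ' : n → K} (hμ : ∑ k ∈ s, x k = #s • μ)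
    (hμ' : ∑ k ∈ insert a s, x k = (#s + 1) • μ') :
    ∑ k ∈ insert a s, vecMulVec (x k - μ') (x k - μ') =
      ∑ k ∈ s, vecMulVec (x k - μ) (x k - μ) +
        (#s * (#s + 1)) • vecMulVec (μ' - μ) (μ' - μ) := by
  have hnew : x a - μ' = #s • (μ' - μ) := by
    rw [sum_insert ha, hμ] at hμ'
    linear_combination (norm := module) hμ'
  rw [sum_insert ha, sum_vecMulVec_sub_sub s x hμ, hnew, ← neg_sub μ', neg_vecMulVec,
    vecMulVec_neg, neg_neg, smul_vecMulVec, vecMulVec_smul, smul_smul]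
  module

variable [Field K]

noncomputable def sampleMean (s : Finset ι) (x : ι → n → K) : n → K :=
  (#s : K)⁻¹ • ∑ k ∈ s, x k

noncomputable def sampleCov (s : Finset ι) (x : ι → n → K) : Matrix n n K :=
  (#s : K)⁻¹ • ∑ k ∈ s, vecMulVec (x k - sampleMean s x) (x k - sampleMean s x)

variable [CharZero K]

theorem card_nsmul_sampleMean (s : Finset ι) (x : ι → n → K) :
    #s • sampleMean s x = ∑ k ∈ s, x k := by
  rcases s.eq_empty_or_nonempty with rfl | hs
  · simp
  · rw [sampleMean, ← Nat.cast_smul_eq_nsmul K, smul_inv_smul₀ (by simp [hs.ne_empty])]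

theorem sampleMean_insert [DecidableEq ι] {s : Finset ι} {a : ι} (ha : a ∉ s) (x : ι → n → K) :
    sampleMean (insert a s) x = sampleMean s x + (#s + 1 : K)⁻¹ • (x a - sampleMean s x) := by
  have hsum := card_nsmul_sampleMean (insert a s) x
  rw [sum_insert ha, ← card_nsmul_sampleMean s x, card_insert_of_notMem ha,
    ← Nat.cast_smul_eq_nsmul K, ← Nat.cast_smul_eq_nsmul K, Nat.cast_succ] at hsum
  rw [← inv_smul_smul₀ (Nat.cast_add_one_ne_zero (R := K) #s) (sampleMean (insert a s) x), hsum]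
  match_scalars <;> field_simp
  ring

theorem sampleCov_insert [DecidableEq ι] {s : Finset ι} {a : ι} (ha : a ∉ s) (x : ι → n → K) :
    sampleCov (insert a s) x = (#s / (#s + 1) : K) • sampleCov s x +
      (#s / (#s + 1) ^ 2 : K) • vecMulVec (x a - sampleMean s x) (x a - sampleMean s x) := by
  rcases s.eq_empty_or_nonempty with rfl | hs
  · simp [sampleCov, sampleMean]
  have hμ' : ∑ k ∈ insert a s, x k = (#s + 1) • sampleMean (insert a s) x := by
    rw [← card_insert_of_notMem ha, card_nsmul_sampleMean]
  rw [sampleCov, sampleCov, card_insert_of_notMem ha,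
    sum_insert_vecMulVec_sub_sub ha x (card_nsmul_sampleMean s x).symm hμ',
    sampleMean_insert ha, add_sub_cancel_left, smul_vecMulVec, vecMulVec_smul, smul_smul,
    ← Nat.cast_smul_eq_nsmul K, smul_smul]
  have hs' : (#s : K) ≠ 0 := by simp [hs.ne_empty]
  match_scalars <;> field_simp

end SampleCovariance

/-- Riccati (Sherman–Morrison) update for the inverse empirical covariance matrix. -/
theorem riccati_update_inverse_sample_covariance
    {p : ℕ} (x : ℕ → (Fin p → ℝ)) (n : ℕ) (hn : 2 ≤ n)
    (Xbar : ℕ → (Fin p → ℝ))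
    (hXbar : ∀ m, Xbar m = (m : ℝ)⁻¹ • ∑ k ∈ Finset.Icc 1 m, x k)
    (S : ℕ → Matrix (Fin p) (Fin p) ℝ)
    (hS : ∀ m, S m = (m : ℝ)⁻¹ •
      ∑ k ∈ Finset.Icc 1 m, Matrix.vecMulVec (x k - Xbar m) (x k - Xbar m))
    (Φ : Fin p → ℝ) (hΦ : Φ = x n - Xbar (n - 1))
    (ρ : ℝ) (hρ : ρ = dotProduct Φ ((S (n - 1))⁻¹.mulVec Φ))
    (hinv : IsUnit (S (n - 1)).det) (hne : (n : ℝ) + ρ ≠ 0) :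
    IsUnit (S n).det ∧
    (S n)⁻¹ = ((n : ℝ) / ((n : ℝ) - 1)) • (S (n - 1))⁻¹ -
      ((n : ℝ) / (((n : ℝ) - 1) * ((n : ℝ) + ρ))) •
        ((S (n - 1))⁻¹ * Matrix.vecMulVec Φ Φ * (S (n - 1))⁻¹) := by
  obtain ⟨m, rfl⟩ : ∃ m, n = m + 1 := ⟨n - 1, by omega⟩
  have hm : (m : ℝ) ≠ 0 := by norm_cast; omega
  simp only [Nat.add_sub_cancel, Nat.cast_add, Nat.cast_one, add_sub_cancel_right] at *
  have hmean : ∀ k, Xbar k = sampleMean (Icc 1 k) x := fun k => by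
    rw [hXbar, sampleMean, Nat.card_Icc, Nat.add_sub_cancel]
  have hcov : ∀ k, S k = sampleCov (Icc 1 k) x := fun k => by
    rw [hS, sampleCov, ← hmean, Nat.card_Icc, Nat.add_sub_cancel]
  have hupdate : S (m + 1) = ((m : ℝ) / (m + 1)) • (S m + vecMulVec Φ (((m : ℝ) + 1)⁻¹ • Φ)) := by
    rw [hcov, hcov, ← insert_Icc_right_eq_Icc_add_one (by omega), sampleCov_insert (by simp),
      Nat.card_Icc, Nat.add_sub_cancel, ← hmean, ← hΦ, vecMulVec_smul]
    match_scalars <;> field_simp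
  have huv : 1 + (((m : ℝ) + 1)⁻¹ • Φ) ⬝ᵥ (S m)⁻¹ *ᵥ Φ ≠ 0 := by
    rw [smul_dotProduct, smul_eq_mul, ← hρ]
    field_simp
    exact div_ne_zero hne (by positivity)
  have hc : (m : ℝ) / (m + 1) ≠ 0 := by positivity
  rw [hupdate, det_smul, inv_smul₀ hc, inv_add_vecMulVec hinv huv, smul_dotProduct, smul_eq_mul,
    ← hρ]
  refine ⟨(isUnit_iff_ne_zero.2 (pow_ne_zero _ hc)).mul (isUnit_det_add_vecMulVec hinv huv), ?_⟩
  rw [vecMulVec_smul, Matrix.mul_smul, Matrix.smul_mul]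
  match_scalars <;> field_simp
end
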